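/- Suppose $\mathsf{F}:[0,T]\times\mathbb{R}^d\to\mathbb{R}^d$ is Lipschitz continuous in the second variable with constant $L$, and $\mathsf{A}$ satisfies the uniform bound $\|\mathsf{A}(t,u)x\|\le C_{\mathsf{A}}\|x\|$. If the maximal time step satisfies $k < \frac{1}{(2C_{\mathsf{A}}+L)C_P}$, then the continuous Galerkin time-stepping scheme admits a unique solution $\mathcal{U}\in\mathcal{S}^{\mathbf{r},1}(\tau_N;\mathbb{R}^d)$, i.e., on each subinterval $I_n$ there exists a unique $\mathcal{U}\in X_a^{r_n}$ (with $a=\mathcal{U}(t_{n-1})$, $\mathcal{U}(0)=u_0$) satisfying $\int_{I_n}(\dot{\mathcal{U}},\varphi)\,dt = \int_{I_n}(\mathsf{F}(t,\mathcal{U}(t)),\varphi(t))\,dt$ for all $\varphi\in\mathcal{P}^{r_n-1}(I_n;\mathbb{R}^d)$. -/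

import Mathlib

open MeasureTheory Real
open scoped RealInnerProductSpace

abbrev E (d : ℕ) := EuclideanSpace ℝ (Fin d)

/-- The `L²` norm of a vector-valued function over the interval `(a,b)`. -/
noncomputable def L2norm {d : ℕ} (f : ℝ → E d) (a b : ℝ) : ℝ :=
  Real.sqrt (∫ t in a..b, ‖f t‖ ^ 2)

/-- `x : ℝ → ℝ^d` is (componentwise) a polynomial of degree at most `r`. -/
def IsPolyDeg {d : ℕ} (r : ℕ) (x : ℝ → E d) : Prop :=
  ∃ p : Fin d → Polynomial ℝ, (∀ i, (p i).natDegree ≤ r) ∧ ∀ t i, x t i = (p i).eval t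

/-! On an interval `[a, b]`, write a trial function as `U = u + ∫ₐ φ` with `φ ∈ 𝒫^{r-1}`. The
Galerkin equations say exactly that `φ` is the `L²(a, b)`-orthogonal projection of
`s ↦ F s (U s)` onto `𝒫^{r-1}`. Since `U - V` vanishes at `a`, the Lipschitz bound on `F` and the
Poincaré inequality give `‖F(U) - F(V)‖ ≤ L (b - a) C_P ‖U' - V'‖`, so this map is a contraction
of the finite-dimensional space `𝒫^{r-1} ⊆ L²` and Banach's fixed point theorem gives a solution.
Testing the difference of two solutions against `U' - V'` gives
`‖U' - V'‖² ≤ L (b - a) C_P ‖U' - V'‖²`, hence `U' = V'`, and then `U = V` by Poincaré and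
because a polynomial vanishing on `(a, b)` is zero. The local solutions are glued by marching
through the intervals. -/

section L2

variable {d : ℕ} {a b : ℝ}

theorem Continuous.memLp_restrict_Ioc {f : ℝ → E d} (hf : Continuous f) :
    MemLp f 2 (volume.restrict (Set.Ioc a b)) := by
  obtain ⟨C, hC⟩ := (isCompact_Icc (a := a) (b := b)).exists_bound_of_continuousOn hf.continuousOn
  exact MemLp.of_bound hf.aestronglyMeasurable C <| (ae_restrict_iff' measurableSet_Ioc).2 <|
    .of_forall fun x hx => hC x (Set.Ioc_subset_Icc_self hx)

theorem L2norm_nonneg (f : ℝ → E d) : 0 ≤ L2norm f a b := Real.sqrt_nonneg _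

theorem L2norm_sq (hab : a ≤ b) (f : ℝ → E d) : L2norm f a b ^ 2 = ∫ s in a..b, ‖f s‖ ^ 2 :=
  Real.sq_sqrt <| intervalIntegral.integral_nonneg hab fun _ _ => sq_nonneg _

theorem MeasureTheory.MemLp.norm_toLp_eq_L2norm (hab : a ≤ b) {f : ℝ → E d}
    (hf : MemLp f 2 (volume.restrict (Set.Ioc a b))) : ‖hf.toLp f‖ = L2norm f a b := by
  rw [Lp.norm_toLp, hf.eLpNorm_eq_integral_rpow_norm two_ne_zero ENNReal.ofNat_ne_top,
    ENNReal.toReal_ofReal (by positivity), L2norm, Real.sqrt_eq_rpow,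
    intervalIntegral.integral_of_le hab]
  norm_num

theorem MeasureTheory.MemLp.inner_toLp_eq_integral (hab : a ≤ b) {f g : ℝ → E d}
    (hf : MemLp f 2 (volume.restrict (Set.Ioc a b)))
    (hg : MemLp g 2 (volume.restrict (Set.Ioc a b))) :
    ⟪hf.toLp f, hg.toLp g⟫ = ∫ s in a..b, ⟪f s, g s⟫ := by
  rw [L2.inner_def, intervalIntegral.integral_of_le hab]
  refine integral_congr_ae ?_
  filter_upwards [hf.coeFn_toLp, hg.coeFn_toLp] with x hfx hgx
  rw [hfx, hgx]

theorem integral_inner_le_L2norm_mul (hab : a ≤ b) {f g : ℝ → E d} (hf : Continuous f)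
    (hg : Continuous g) : ∫ s in a..b, ⟪f s, g s⟫ ≤ L2norm f a b * L2norm g a b := by
  rw [← hf.memLp_restrict_Ioc.inner_toLp_eq_integral hab hg.memLp_restrict_Ioc,
    ← hf.memLp_restrict_Ioc.norm_toLp_eq_L2norm hab,
    ← hg.memLp_restrict_Ioc.norm_toLp_eq_L2norm hab]
  exact real_inner_le_norm _ _

theorem L2norm_le_mul_of_norm_le (hab : a ≤ b) {f g : ℝ → E d} (hf : Continuous f)
    (hg : Continuous g) {L : ℝ} (hL : 0 ≤ L) (h : ∀ s, ‖f s‖ ≤ L * ‖g s‖) :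
    L2norm f a b ≤ L * L2norm g a b := by
  have hint : ∫ s in a..b, ‖f s‖ ^ 2 ≤ ∫ s in a..b, L ^ 2 * ‖g s‖ ^ 2 :=
    intervalIntegral.integral_mono_on hab ((hf.norm.pow 2).intervalIntegrable _ _)
      ((continuous_const.mul (hg.norm.pow 2)).intervalIntegrable _ _) fun s _ => by
        rw [← mul_pow]; exact pow_le_pow_left₀ (norm_nonneg _) (h s) 2
  rw [L2norm, L2norm, ← Real.sqrt_sq hL, ← Real.sqrt_mul (sq_nonneg L),
    ← intervalIntegral.integral_const_mul]
  exact Real.sqrt_le_sqrt hint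

theorem integral_inner_sub_left {f g φ : ℝ → E d} (hf : Continuous f) (hg : Continuous g)
    (hφ : Continuous φ) :
    ∫ s in a..b, ⟪f s - g s, φ s⟫ = (∫ s in a..b, ⟪f s, φ s⟫) - ∫ s in a..b, ⟪g s, φ s⟫ := by
  simp_rw [inner_sub_left]
  exact intervalIntegral.integral_sub ((hf.inner hφ).intervalIntegrable _ _)
    ((hg.inner hφ).intervalIntegrable _ _)

theorem eqOn_Ioo_zero_of_L2norm_eq_zero (hab : a ≤ b) {f : ℝ → E d} (hf : Continuous f)
    (h : L2norm f a b = 0) : Set.EqOn f 0 (Set.Ioo a b) := by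
  have hint : ∫ s in a..b, ‖f s‖ ^ 2 = 0 := by rw [← L2norm_sq hab, h]; ring
  rw [intervalIntegral.integral_eq_zero_iff_of_le_of_nonneg_ae hab
    (.of_forall fun _ => sq_nonneg _) ((hf.norm.pow 2).intervalIntegrable _ _)] at hint
  intro s hs
  simpa using Measure.eqOn_open_of_ae_eq
    (ae_restrict_of_ae_restrict_of_subset Set.Ioo_subset_Ioc_self hint) isOpen_Ioo
    (hf.norm.pow 2).continuousOn continuousOn_const hs

end L2

section PolyCurve

variable {d : ℕ}

noncomputable def polyCurve (p : Fin d → Polynomial ℝ) : ℝ → E d :=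
  fun t => WithLp.toLp 2 fun i => (p i).eval t

theorem hasDerivAt_polyCurve (p : Fin d → Polynomial ℝ) (t : ℝ) :
    HasDerivAt (polyCurve p) (polyCurve (fun i => (p i).derivative) t) t :=
  (EuclideanSpace.equiv (Fin d) ℝ).symm.hasFDerivAt.comp_hasDerivAt t
    (hasDerivAt_pi.2 fun i => (p i).hasDerivAt t)

namespace IsPolyDeg

variable {r : ℕ} {x y : ℝ → E d}

theorem exists_eq_polyCurve (hx : IsPolyDeg r x) :
    ∃ p : Fin d → Polynomial ℝ, (∀ i, (p i).natDegree ≤ r) ∧ x = polyCurve p := by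
  obtain ⟨p, hp, hxp⟩ := hx
  exact ⟨p, hp, funext fun t => PiLp.ext fun i => hxp t i⟩

theorem differentiable (hx : IsPolyDeg r x) : Differentiable ℝ x := by
  obtain ⟨p, -, rfl⟩ := hx.exists_eq_polyCurve
  exact fun t => (hasDerivAt_polyCurve p t).differentiableAt

theorem continuous (hx : IsPolyDeg r x) : Continuous x := hx.differentiable.continuous

theorem deriv (hx : IsPolyDeg r x) : IsPolyDeg (r - 1) (deriv x) := by
  obtain ⟨p, hp, rfl⟩ := hx.exists_eq_polyCurve
  refine ⟨fun i => (p i).derivative, fun i => ?_, fun t i => ?_⟩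
  · exact (Polynomial.natDegree_derivative_le _).trans (Nat.sub_le_sub_right (hp i) 1)
  · rw [(hasDerivAt_polyCurve p t).deriv]
    rfl

theorem sub (hx : IsPolyDeg r x) (hy : IsPolyDeg r y) : IsPolyDeg r (x - y) := by
  obtain ⟨p, hp, hxp⟩ := hx
  obtain ⟨q, hq, hyq⟩ := hy
  refine ⟨p - q, fun i => ?_, fun t i => ?_⟩
  · exact (Polynomial.natDegree_sub_le _ _).trans (max_le (hp i) (hq i))
  · simp [hxp, hyq]

theorem eq_zero_of_L2norm_eq_zero {a b : ℝ} (hab : a < b) (hx : IsPolyDeg r x)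
    (h : L2norm x a b = 0) : x = 0 := by
  have hx0 := eqOn_Ioo_zero_of_L2norm_eq_zero hab.le hx.continuous h
  obtain ⟨p, -, hxp⟩ := hx
  have hroots : ∀ i, p i = 0 := fun i =>
    (p i).eq_zero_of_infinite_isRoot <| (Set.Ioo_infinite hab).mono fun t ht => by
      simp [Polynomial.IsRoot, ← hxp, hx0 ht]
  funext t
  ext i
  simp [hxp, hroots]

end IsPolyDeg

end PolyCurve

theorem Submodule.exists_inner_sub_eq_zero_of_lipschitzWith {H : Type*}
    [NormedAddCommGroup H] [InnerProductSpace ℝ H] (S : Submodule ℝ H) [CompleteSpace S]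
    (G : S → H) {q : NNReal} (hq : q < 1) (hG : LipschitzWith q G) :
    ∃ s : S, ∀ v ∈ S, ⟪G s - s, v⟫ = 0 := by
  have hT : ContractingWith q (S.orthogonalProjectionOnto ∘ G) := by
    refine ⟨hq, ?_⟩
    simpa using (S.orthogonalProjectionOnto.lipschitz.weaken
      (show _ ≤ 1 from mod_cast S.orthogonalProjectionOnto_norm_le)).comp hG
  refine ⟨ContractingWith.fixedPoint _ hT, fun v hv => ?_⟩
  have hfix : S.starProjection (G _) = _ := congrArg Subtype.val hT.fixedPoint_isFixedPt
  rw [← hfix]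
  exact S.starProjection_inner_eq_zero _ v hv

section Monomials

variable {d r : ℕ}

noncomputable def monomialSum (r : ℕ) : (Fin r → E d) →ₗ[ℝ] ℝ → E d where
  toFun c s := ∑ j : Fin r, s ^ (j : ℕ) • c j
  map_add' c c' := by ext; simp [smul_add, Finset.sum_add_distrib]
  map_smul' x c := by ext; simp [Finset.smul_sum, smul_comm x]

noncomputable def monomialPrimitive (r : ℕ) (a : ℝ) : (Fin r → E d) →ₗ[ℝ] ℝ → E d where
  toFun c s := ∑ j : Fin r, ((s ^ ((j : ℕ) + 1) - a ^ ((j : ℕ) + 1)) / ((j : ℕ) + 1)) • c j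
  map_add' c c' := by ext; simp [smul_add, Finset.sum_add_distrib]
  map_smul' x c := by ext; simp [Finset.smul_sum, smul_comm x]

theorem continuous_monomialSum (c : Fin r → E d) : Continuous (monomialSum r c) :=
  show Continuous fun s : ℝ => ∑ j : Fin r, s ^ (j : ℕ) • c j from
    continuous_finsetSum _ fun _ _ => (continuous_pow _).smul continuous_const

theorem monomialPrimitive_self (a : ℝ) (c : Fin r → E d) : monomialPrimitive r a c a = 0 := by
  simp [monomialPrimitive]

theorem hasDerivAt_monomialPrimitive (a : ℝ) (c : Fin r → E d) (s : ℝ) :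
    HasDerivAt (monomialPrimitive r a c) (monomialSum r c s) s := by
  show HasDerivAt
    (fun s => ∑ j : Fin r, ((s ^ ((j : ℕ) + 1) - a ^ ((j : ℕ) + 1)) / ((j : ℕ) + 1)) • c j)
    (∑ j : Fin r, s ^ (j : ℕ) • c j) s
  refine HasDerivAt.fun_sum fun j _ => ?_
  convert (((hasDerivAt_pow ((j : ℕ) + 1) s).sub_const _).div_const ((j : ℕ) + 1 : ℝ)).smul_const
    (c j) using 2
  field_simp
  push_cast
  ring

theorem deriv_monomialPrimitive (a : ℝ) (c : Fin r → E d) :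
    deriv (monomialPrimitive r a c) = monomialSum r c :=
  funext fun s => (hasDerivAt_monomialPrimitive a c s).deriv

theorem exists_monomialSum_eq (hr : 1 ≤ r) {φ : ℝ → E d} (hφ : IsPolyDeg (r - 1) φ) :
    ∃ c : Fin r → E d, monomialSum r c = φ := by
  obtain ⟨p, hp, hφp⟩ := hφ
  refine ⟨fun j => WithLp.toLp 2 fun i => (p i).coeff j, funext fun s => PiLp.ext fun i => ?_⟩
  rw [hφp, Polynomial.eval_eq_sum_range' (n := r) (by have := hp i; omega),
    ← Fin.sum_univ_eq_sum_range (fun j => (p i).coeff j * s ^ j)]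
  simp [monomialSum, mul_comm]

theorem isPolyDeg_const_add_monomialPrimitive (a : ℝ) (u : E d) (c : Fin r → E d) :
    IsPolyDeg r fun s => u + monomialPrimitive r a c s := by
  refine ⟨fun i => .C (u i) + ∑ j : Fin r, .C (c j i / ((j : ℕ) + 1)) *
      (.X ^ ((j : ℕ) + 1) - .C (a ^ ((j : ℕ) + 1))), fun i => ?_, fun s i => ?_⟩
  · refine (Polynomial.natDegree_add_le _ _).trans (max_le (by simp) ?_)
    refine Polynomial.natDegree_sum_le_of_forall_le _ _ fun j _ => ?_
    refine (Polynomial.natDegree_C_mul_le _ _).trans ?_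
    refine (Polynomial.natDegree_sub_le _ _).trans ?_
    simp only [Polynomial.natDegree_X_pow, Polynomial.natDegree_C]
    omega
  · simp [monomialPrimitive, Polynomial.eval_finsetSum]
    refine Finset.sum_congr rfl fun j _ => ?_
    ring

noncomputable def monomialSumLp (a b : ℝ) (r : ℕ) :
    (Fin r → E d) →ₗ[ℝ] Lp (E d) 2 (volume.restrict (Set.Ioc a b)) where
  toFun c := (continuous_monomialSum c).memLp_restrict_Ioc.toLp (monomialSum r c)
  map_add' c c' := by simp only [map_add]; exact MemLp.toLp_add _ _
  map_smul' x c := by simp only [map_smul, RingHom.id_apply]; exact MemLp.toLp_const_smul _ _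

theorem monomialSumLp_apply (a b : ℝ) (c : Fin r → E d) :
    monomialSumLp a b r c = (continuous_monomialSum c).memLp_restrict_Ioc.toLp (monomialSum r c) :=
  rfl

end Monomials

def GalerkinEq {d : ℕ} (F : ℝ → E d → E d) (a b : ℝ) (r : ℕ) (U : ℝ → E d) : Prop :=
  ∀ φ : ℝ → E d, IsPolyDeg (r - 1) φ →
    (∫ s in a..b, ⟪deriv U s, φ s⟫) = ∫ s in a..b, ⟪F s (U s), φ s⟫

section Galerkin

variable {d r : ℕ} {F : ℝ → E d → E d} {L K a b : ℝ}

theorem L2norm_sub_comp_le (hab : a ≤ b) (hL : 0 ≤ L)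
    (hFcont : Continuous fun p : ℝ × E d => F p.1 p.2)
    (hFlip : ∀ (s : ℝ) (v w : E d), ‖F s v - F s w‖ ≤ L * ‖v - w‖)
    {U V : ℝ → E d} (hU : Continuous U) (hV : Continuous V)
    (hP : L2norm (U - V) a b ≤ K * L2norm (deriv (U - V)) a b) :
    L2norm (fun s => F s (U s) - F s (V s)) a b ≤ L * K * L2norm (deriv (U - V)) a b :=
  calc L2norm (fun s => F s (U s) - F s (V s)) a b ≤ L * L2norm (U - V) a b :=
        L2norm_le_mul_of_norm_le hab ((hFcont.comp₂ continuous_id hU).sub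
          (hFcont.comp₂ continuous_id hV)) (hU.sub hV) hL fun s => hFlip s _ _
    _ ≤ L * (K * L2norm (deriv (U - V)) a b) := mul_le_mul_of_nonneg_left hP hL
    _ = L * K * L2norm (deriv (U - V)) a b := by ring

theorem GalerkinEq.eq_of_apply_eq (hab : a < b) (hL : 0 ≤ L)
    (hFcont : Continuous fun p : ℝ × E d => F p.1 p.2)
    (hFlip : ∀ (s : ℝ) (v w : E d), ‖F s v - F s w‖ ≤ L * ‖v - w‖)
    (hP : ∀ y : ℝ → E d, IsPolyDeg r y → y a = 0 → L2norm y a b ≤ K * L2norm (deriv y) a b)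
    (hLK : L * K < 1) {U V : ℝ → E d} (hU : IsPolyDeg r U) (hV : IsPolyDeg r V)
    (hUV : U a = V a) (hGU : GalerkinEq F a b r U) (hGV : GalerkinEq F a b r V) : U = V := by
  have hw := hU.sub hV
  have hwa : (U - V) a = 0 := sub_eq_zero.2 hUV
  set φ := deriv (U - V) with hφ
  have hφs : ∀ s, deriv U s - deriv V s = φ s := fun s =>
    (deriv_sub (hU.differentiable s) (hV.differentiable s)).symm
  have hφc : Continuous φ := hw.deriv.continuous
  have hFU : Continuous fun s => F s (U s) := hFcont.comp₂ continuous_id hU.continuous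
  have hFV : Continuous fun s => F s (V s) := hFcont.comp₂ continuous_id hV.continuous
  have hφ_sq : L2norm φ a b ^ 2 ≤ L * K * L2norm φ a b ^ 2 :=
    calc L2norm φ a b ^ 2 = ∫ s in a..b, ⟪deriv U s - deriv V s, φ s⟫ := by
          rw [L2norm_sq hab.le]
          simp only [hφs, real_inner_self_eq_norm_sq]
      _ = (∫ s in a..b, ⟪F s (U s), φ s⟫) - ∫ s in a..b, ⟪F s (V s), φ s⟫ := by
          rw [integral_inner_sub_left hU.deriv.continuous hV.deriv.continuous hφc,
            hGU φ hw.deriv, hGV φ hw.deriv]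
      _ = ∫ s in a..b, ⟪F s (U s) - F s (V s), φ s⟫ := (integral_inner_sub_left hFU hFV hφc).symm
      _ ≤ L2norm (fun s => F s (U s) - F s (V s)) a b * L2norm φ a b :=
          integral_inner_le_L2norm_mul hab.le (hFU.sub hFV) hφc
      _ ≤ L * K * L2norm φ a b * L2norm φ a b := by
          gcongr
          · exact L2norm_nonneg _
          · exact L2norm_sub_comp_le hab.le hL hFcont hFlip hU.continuous hV.continuous
              (hP _ hw hwa)
      _ = L * K * L2norm φ a b ^ 2 := by ring
  have hφ0 : L2norm φ a b = 0 :=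
    pow_eq_zero_iff two_ne_zero |>.1 <| le_antisymm (by nlinarith) (sq_nonneg _)
  have hw0 : L2norm (U - V) a b = 0 :=
    le_antisymm ((hP _ hw hwa).trans_eq (by rw [← hφ, hφ0, mul_zero])) (L2norm_nonneg _)
  exact sub_eq_zero.1 (hw.eq_zero_of_L2norm_eq_zero hab hw0)

theorem L2norm_sub_comp_primitive_le (hab : a ≤ b) (hL : 0 ≤ L)
    (hFcont : Continuous fun p : ℝ × E d => F p.1 p.2)
    (hFlip : ∀ (s : ℝ) (v w : E d), ‖F s v - F s w‖ ≤ L * ‖v - w‖)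
    (hP : ∀ y : ℝ → E d, IsPolyDeg r y → y a = 0 → L2norm y a b ≤ K * L2norm (deriv y) a b)
    (u : E d) (c c' : Fin r → E d) :
    L2norm (fun s => F s (u + monomialPrimitive r a c s) - F s (u + monomialPrimitive r a c' s))
      a b ≤ L * K * L2norm (monomialSum r (c - c')) a b := by
  have hU := isPolyDeg_const_add_monomialPrimitive a u c
  have hU' := isPolyDeg_const_add_monomialPrimitive a u c'
  have hdiff : ((fun s => u + monomialPrimitive r a c s) - fun s => u + monomialPrimitive r a c' s)
      = monomialPrimitive r a (c - c') := by
    funext s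
    simp [map_sub]
  have := L2norm_sub_comp_le hab hL hFcont hFlip hU.continuous hU'.continuous
    (hP _ (hU.sub hU') (by simp [monomialPrimitive_self]))
  rwa [hdiff, deriv_monomialPrimitive] at this

theorem exists_galerkinEq (hab : a < b) (hL : 0 ≤ L)
    (hFcont : Continuous fun p : ℝ × E d => F p.1 p.2)
    (hFlip : ∀ (s : ℝ) (v w : E d), ‖F s v - F s w‖ ≤ L * ‖v - w‖)
    (hP : ∀ y : ℝ → E d, IsPolyDeg r y → y a = 0 → L2norm y a b ≤ K * L2norm (deriv y) a b)
    (hLK : L * K < 1) (hr : 1 ≤ r) (u : E d) :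
    ∃ U : ℝ → E d, U a = u ∧ IsPolyDeg r U ∧ GalerkinEq F a b r U := by
  set S := LinearMap.range (monomialSumLp (d := d) a b r)
  have : CompleteSpace S := FiniteDimensional.complete ℝ S
  let coeffs : S → Fin r → E d := fun v => (LinearMap.mem_range.1 v.2).choose
  have hcoeffs : ∀ v, monomialSumLp a b r (coeffs v) = v := fun v =>
    (LinearMap.mem_range.1 v.2).choose_spec
  let U : (Fin r → E d) → ℝ → E d := fun c s => u + monomialPrimitive r a c s
  have hU : ∀ c, IsPolyDeg r (U c) := isPolyDeg_const_add_monomialPrimitive a u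
  have hFU : ∀ c, Continuous fun s => F s (U c s) := fun c =>
    hFcont.comp₂ continuous_id (hU c).continuous
  let G : S → Lp (E d) 2 (volume.restrict (Set.Ioc a b)) := fun v =>
    (hFU (coeffs v)).memLp_restrict_Ioc.toLp _
  have hG : LipschitzWith (L * K).toNNReal G := .of_dist_le' fun v w => by
    rw [dist_eq_norm, ← MemLp.toLp_sub, MemLp.norm_toLp_eq_L2norm hab.le, Subtype.dist_eq,
      dist_eq_norm, ← hcoeffs v, ← hcoeffs w, ← map_sub, monomialSumLp_apply,
      MemLp.norm_toLp_eq_L2norm hab.le]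
    exact L2norm_sub_comp_primitive_le hab.le hL hFcont hFlip hP u _ _
  obtain ⟨v, hv⟩ := S.exists_inner_sub_eq_zero_of_lipschitzWith G (Real.toNNReal_lt_one.2 hLK) hG
  refine ⟨U (coeffs v), by simp [U, monomialPrimitive_self], hU _, fun φ hφ => ?_⟩
  obtain ⟨c, rfl⟩ := exists_monomialSum_eq hr hφ
  have h := hv _ (LinearMap.mem_range_self _ c)
  rw [← hcoeffs v, monomialSumLp_apply, monomialSumLp_apply, ← MemLp.toLp_sub,
    MemLp.inner_toLp_eq_integral hab.le] at h
  have hderiv : deriv (U (coeffs v)) = monomialSum r (coeffs v) :=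
    funext fun s => ((hasDerivAt_monomialPrimitive a _ s).const_add u).deriv
  rw [hderiv, eq_comm, ← sub_eq_zero, ← integral_inner_sub_left (hFU _)
    (continuous_monomialSum _) (continuous_monomialSum _)]
  exact h

end Galerkin

section Marching

variable {T X : Type*} (N : ℕ) (t : ℕ → T) (P : ℕ → (T → X) → Prop)

theorem exists_marching (u₀ : X) (h : ∀ n < N, ∀ u, ∃ U : T → X, U (t n) = u ∧ P n U) :
    ∃ U : ℕ → T → X, U 0 (t 0) = u₀ ∧
      (∀ n, n + 1 < N → U (n + 1) (t (n + 1)) = U n (t (n + 1))) ∧ ∀ n < N, P n (U n) := by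
  have h' : ∀ n u, ∃ U : T → X, U (t n) = u ∧ (n < N → P n U) := fun n u =>
    if hn : n < N then (h n hn u).imp fun _ hU => ⟨hU.1, fun _ => hU.2⟩
    else ⟨fun _ => u, rfl, fun h => absurd h hn⟩
  choose step hstep_init hstep using h'
  refine ⟨fun n => Nat.rec (step 0 u₀) (fun m Um => step (m + 1) (Um (t (m + 1)))) n,
    hstep_init 0 u₀, fun n _ => hstep_init (n + 1) _, fun n hn => ?_⟩
  cases n with
  | zero => exact hstep 0 u₀ hn
  | succ m => exact hstep (m + 1) _ hn

theorem eq_of_marching (huniq : ∀ n < N, ∀ U V, P n U → P n V → U (t n) = V (t n) → U = V)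
    {U V : ℕ → T → X} (h₀ : U 0 (t 0) = V 0 (t 0))
    (hU : ∀ n, n + 1 < N → U (n + 1) (t (n + 1)) = U n (t (n + 1)))
    (hV : ∀ n, n + 1 < N → V (n + 1) (t (n + 1)) = V n (t (n + 1)))
    (hPU : ∀ n < N, P n (U n)) (hPV : ∀ n < N, P n (V n)) : ∀ n < N, U n = V n := by
  intro n
  induction n with
  | zero => exact fun hn => huniq 0 hn _ _ (hPU 0 hn) (hPV 0 hn) h₀
  | succ m ih =>
    exact fun hn => huniq _ hn _ _ (hPU _ hn) (hPV _ hn) (by rw [hU m hn, hV m hn, ih (by omega)])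

end Marching

theorem mul_mul_lt_one_of_lt_one_div {C_A L C_P k : ℝ} (hCA : 0 ≤ C_A) (hL : 0 ≤ L) (hk₀ : 0 < k)
    (hk : k < 1 / ((2 * C_A + L) * C_P)) : L * (k * C_P) < 1 := by
  have hpos : 0 < (2 * C_A + L) * C_P := one_div_pos.1 (hk₀.trans hk)
  have hCP : 0 < C_P := pos_of_mul_pos_right hpos (by positivity)
  have := (lt_div_iff₀ hpos).1 hk
  nlinarith [mul_nonneg (mul_nonneg hCA hk₀.le) hCP.le]

theorem cG_wellposed_general {d : ℕ} (N : ℕ) (t : ℕ → ℝ)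
    (hmono : ∀ n < N, t n < t (n + 1))
    (r : ℕ → ℕ) (hr : ∀ n < N, 1 ≤ r n)
    (F : ℝ → E d → E d) (L : ℝ) (hL : 0 ≤ L)
    (hFcont : Continuous fun p : ℝ × E d => F p.1 p.2)
    (hFlip : ∀ (s : ℝ) (v w : E d), ‖F s v - F s w‖ ≤ L * ‖v - w‖)
    (C_A : ℝ) (hCA : 0 ≤ C_A) (C_P : ℝ)
    (hPoincare : ∀ (a b : ℝ), a < b → ∀ (m : ℕ) (y : ℝ → E d), IsPolyDeg m y → y a = 0 →
      L2norm y a b ≤ (b - a) * C_P * L2norm (deriv y) a b)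
    (u0 : E d)
    (hk : ∀ n < N, t (n + 1) - t n < 1 / ((2 * C_A + L) * C_P)) :
    (∃ U : ℕ → ℝ → E d,
      (∀ n < N, IsPolyDeg (r n) (U n)) ∧
      U 0 (t 0) = u0 ∧
      (∀ n, n + 1 < N → U (n + 1) (t (n + 1)) = U n (t (n + 1))) ∧
      (∀ n < N, ∀ φ : ℝ → E d, IsPolyDeg (r n - 1) φ →
        (∫ s in t n..t (n + 1), ⟪deriv (U n) s, φ s⟫)
          = ∫ s in t n..t (n + 1), ⟪F s (U n s), φ s⟫)) ∧
    (∀ U V : ℕ → ℝ → E d,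
      ((∀ n < N, IsPolyDeg (r n) (U n)) ∧
       U 0 (t 0) = u0 ∧
       (∀ n, n + 1 < N → U (n + 1) (t (n + 1)) = U n (t (n + 1))) ∧
       (∀ n < N, ∀ φ : ℝ → E d, IsPolyDeg (r n - 1) φ →
         (∫ s in t n..t (n + 1), ⟪deriv (U n) s, φ s⟫)
           = ∫ s in t n..t (n + 1), ⟪F s (U n s), φ s⟫)) →
      ((∀ n < N, IsPolyDeg (r n) (V n)) ∧
       V 0 (t 0) = u0 ∧
       (∀ n, n + 1 < N → V (n + 1) (t (n + 1)) = V n (t (n + 1))) ∧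
       (∀ n < N, ∀ φ : ℝ → E d, IsPolyDeg (r n - 1) φ →
         (∫ s in t n..t (n + 1), ⟪deriv (V n) s, φ s⟫)
           = ∫ s in t n..t (n + 1), ⟪F s (V n s), φ s⟫)) →
      ∀ n < N, ∀ s : ℝ, U n s = V n s) := by
  have hLK : ∀ n < N, L * ((t (n + 1) - t n) * C_P) < 1 := fun n hn =>
    mul_mul_lt_one_of_lt_one_div hCA hL (sub_pos.2 (hmono n hn)) (hk n hn)
  have hP n (hn : n < N) := hPoincare _ _ (hmono n hn) (r n)
  constructor
  · obtain ⟨U, hU₀, hUcont, hU⟩ := exists_marching N t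
      (fun n W => IsPolyDeg (r n) W ∧ GalerkinEq F (t n) (t (n + 1)) (r n) W) u0 fun n hn =>
        exists_galerkinEq (hmono n hn) hL hFcont hFlip (hP n hn) (hLK n hn) (hr n hn)
    exact ⟨U, fun n hn => (hU n hn).1, hU₀, hUcont, fun n hn => (hU n hn).2⟩
  · rintro U V ⟨hU, hU₀, hUcont, hUG⟩ ⟨hV, hV₀, hVcont, hVG⟩ n hn s
    rw [eq_of_marching N t (fun n W => IsPolyDeg (r n) W ∧ GalerkinEq F (t n) (t (n + 1)) (r n) W)
      (fun n hn W W' hW hW' hWW' => GalerkinEq.eq_of_apply_eq (hmono n hn) hL hFcont hFlip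
        (hP n hn) (hLK n hn) hW.1 hW'.1 hWW' hW.2 hW'.2)
      (hU₀.trans hV₀.symm) hUcont hVcont (fun n hn => ⟨hU n hn, hUG n hn⟩)
      (fun n hn => ⟨hV n hn, hVG n hn⟩) n hn]

/-- Main theorem: if `F` is Lipschitz with constant `L`, `A` is uniformly bounded by `C_A`,
and the maximal time step satisfies `k < 1/((2 C_A + L) C_P)`, then the cG time-stepping
scheme admits a unique solution: on each subinterval there is a unique polynomial piece
with the prescribed initial value satisfying the Galerkin equations, and the pieces match
continuously at the nodes. -/
theorem cG_wellposed {d : ℕ} (N : ℕ) (hN : 0 < N) (t : ℕ → ℝ)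
    (ht0 : t 0 = 0) (hmono : ∀ n < N, t n < t (n + 1))
    (r : ℕ → ℕ) (hr : ∀ n < N, 1 ≤ r n)
    (F : ℝ → E d → E d) (L : ℝ) (hL : 0 ≤ L)
    (hFcont : Continuous fun p : ℝ × E d => F p.1 p.2)
    (hFlip : ∀ (s : ℝ) (v w : E d), ‖F s v - F s w‖ ≤ L * ‖v - w‖)
    (C_A : ℝ) (hCA : 0 ≤ C_A) (C_P : ℝ) (hCP : 0 < C_P)
    (hPoincare : ∀ (a b : ℝ), a < b → ∀ (m : ℕ) (y : ℝ → E d), IsPolyDeg m y → y a = 0 →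
      L2norm y a b ≤ (b - a) * C_P * L2norm (deriv y) a b)
    (u0 : E d)
    (hk : ∀ n < N, t (n + 1) - t n < 1 / ((2 * C_A + L) * C_P)) :
    (∃ U : ℕ → ℝ → E d,
      (∀ n < N, IsPolyDeg (r n) (U n)) ∧
      U 0 (t 0) = u0 ∧
      (∀ n, n + 1 < N → U (n + 1) (t (n + 1)) = U n (t (n + 1))) ∧
      (∀ n < N, ∀ φ : ℝ → E d, IsPolyDeg (r n - 1) φ →
        (∫ s in t n..t (n + 1), ⟪deriv (U n) s, φ s⟫)
          = ∫ s in t n..t (n + 1), ⟪F s (U n s), φ s⟫)) ∧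
    (∀ U V : ℕ → ℝ → E d,
      ((∀ n < N, IsPolyDeg (r n) (U n)) ∧
       U 0 (t 0) = u0 ∧
       (∀ n, n + 1 < N → U (n + 1) (t (n + 1)) = U n (t (n + 1))) ∧
       (∀ n < N, ∀ φ : ℝ → E d, IsPolyDeg (r n - 1) φ →
         (∫ s in t n..t (n + 1), ⟪deriv (U n) s, φ s⟫)
           = ∫ s in t n..t (n + 1), ⟪F s (U n s), φ s⟫)) →
      ((∀ n < N, IsPolyDeg (r n) (V n)) ∧
       V 0 (t 0) = u0 ∧
       (∀ n, n + 1 < N → V (n + 1) (t (n + 1)) = V n (t (n + 1))) ∧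
       (∀ n < N, ∀ φ : ℝ → E d, IsPolyDeg (r n - 1) φ →
         (∫ s in t n..t (n + 1), ⟪deriv (V n) s, φ s⟫)
           = ∫ s in t n..t (n + 1), ⟪F s (V n s), φ s⟫)) →
      ∀ n < N, ∀ s : ℝ, U n s = V n s) :=
  cG_wellposed_general N t hmono r hr F L hL hFcont hFlip C_A hCA C_P hPoincare u0 hk
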